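/- arXiv:2008.09956 — 2 statements merged into one kernel-verified Lean document; each statement's English description precedes it below -/
import Mathlib

section
/- Fix θ ∈ (0,1/2) and define w_θ : [0,1) → [0,∞) by w_θ(s) = 0 for s ∈ [0,1-θ] and w_θ(s) = −ln(1 − (s-1+θ)²/θ²) for s ∈ [1-θ,1). Then for every s ∈ (1 − (3/2)θ, 1), setting ζ := (1/4)θ(1-s), one has 0 < s−ζ < s+ζ < 1, exp(w_θ(s+ζ) − w_θ(s−ζ)) ≤ 1 + 2θ, and 10^{-2}θ² ≤ ζ·exp(w_θ(s−ζ)) ≤ 1. -/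
open Real

/-- The conformal blow-up profile w_θ. -/
noncomputable def wProfile (θ s : ℝ) : ℝ :=
  if s ≤ 1 - θ then 0 else -Real.log (1 - (s - 1 + θ)^2 / θ^2)

lemma expW_gt (θ u : ℝ) (h : ¬ u ≤ 1 - θ) (hθ : θ ≠ 0)
    (hpos : 0 < θ^2 - (u - 1 + θ)^2) :
    Real.exp (wProfile θ u) = θ^2 / (θ^2 - (u - 1 + θ)^2) := by
  have hrw : 1 - (u - 1 + θ)^2 / θ^2 = (θ^2 - (u - 1 + θ)^2) / θ^2 := by
    field_simp
  rw [wProfile, if_neg h, Real.exp_neg, Real.exp_log (by rw [hrw]; positivity),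
    hrw, inv_div]

set_option maxHeartbeats 1000000 in
/-- quantitative metric-equivalence estimates for the conformal
blow-up profile on the band (1 - (3/2)θ, 1). -/
theorem stmt_1 (θ : ℝ) (hθ : θ ∈ Set.Ioo (0:ℝ) (1/2))
    (s : ℝ) (hs : s ∈ Set.Ioo (1 - (3/2)*θ) 1) :
    let ζ := (1/4) * θ * (1 - s)
    0 < s - ζ ∧ s - ζ < s + ζ ∧ s + ζ < 1 ∧
    Real.exp (wProfile θ (s + ζ) - wProfile θ (s - ζ)) ≤ 1 + 2*θ ∧
    10⁻¹^2 * θ^2 ≤ ζ * Real.exp (wProfile θ (s - ζ)) ∧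
    ζ * Real.exp (wProfile θ (s - ζ)) ≤ 1 := by
  obtain ⟨hθ0, hθ2⟩ := hθ
  obtain ⟨hs1, hs2⟩ := hs
  intro ζ
  have hζdef : ζ = (1/4) * θ * (1 - s) := rfl
  clear_value ζ
  have ht : 0 < 1 - s := by linarith
  have ht3 : 1 - s < (3/2)*θ := by linarith
  have hζ0 : 0 < ζ := by rw [hζdef]; positivity
  have hζsmall : ζ < (3/16)*θ := by
    rw [hζdef]; nlinarith
  have hζt : ζ < 1 - s := by
    rw [hζdef]; nlinarith
  have h4 : 4*ζ = θ*(1-s) := by rw [hζdef]; ring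
  have hθne : θ ≠ 0 := ne_of_gt hθ0
  have hζθ2 : ζ < (3/8)*θ^2 := by nlinarith
  -- positivity of the two denominators
  have hsl : 1 - 2*θ < s - ζ := by nlinarith
  have hP : 0 < θ^2 - (s - ζ - 1 + θ)^2 := by nlinarith
  have hQ : 0 < θ^2 - (s + ζ - 1 + θ)^2 := by nlinarith
  refine ⟨by nlinarith, by linarith, by linarith, ?_, ?_, ?_⟩
  · -- ratio bound
    by_cases hm : s - ζ ≤ 1 - θ
    · have hw0 : wProfile θ (s - ζ) = 0 := by simp [wProfile, hm]
      by_cases hp : s + ζ ≤ 1 - θ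
      · have hw0' : wProfile θ (s + ζ) = 0 := by simp [wProfile, hp]
        rw [hw0, hw0', sub_zero, Real.exp_zero]; linarith
      · rw [hw0, sub_zero, expW_gt θ _ hp hθne hQ]
        rw [div_le_iff₀ hQ]
        have hq0 : 0 < s + ζ - 1 + θ := by push_neg at hp; linarith
        have hq1 : s + ζ - 1 + θ ≤ 2*ζ := by linarith
        have hq3 : s + ζ - 1 + θ < (3/4)*θ^2 := by nlinarith
        nlinarith [mul_pos hq0 hq0, mul_lt_mul_of_pos_left hq3 hq0,
          mul_lt_mul_of_pos_left hq3 (show (0:ℝ) < θ^2 by positivity),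
          mul_nonneg (mul_nonneg hθ0.le hθ0.le) (mul_nonneg hθ0.le hθ0.le),
          mul_pos (mul_pos hθ0 hθ0) hθ0,
          mul_nonneg (show (0:ℝ) ≤ 1/2 - θ by linarith) (mul_pos hq0 hq0).le,
          mul_nonneg (show (0:ℝ) ≤ 1/2 - θ by linarith)
            (mul_pos (mul_pos hθ0 hθ0) hθ0).le]
    · have hm' : 1 - θ < s - ζ := not_le.mp hm
      have hp : ¬ s + ζ ≤ 1 - θ := by push_neg; linarith
      rw [Real.exp_sub, expW_gt θ _ hp hθne hQ, expW_gt θ _ hm hθne hP]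
      have hPne : (θ^2 - (s - ζ - 1 + θ)^2) ≠ 0 := ne_of_gt hP
      have hQne : (θ^2 - (s + ζ - 1 + θ)^2) ≠ 0 := ne_of_gt hQ
      have hrat : θ^2 / (θ^2 - (s + ζ - 1 + θ)^2) / (θ^2 / (θ^2 - (s - ζ - 1 + θ)^2))
          = (θ^2 - (s - ζ - 1 + θ)^2) / (θ^2 - (s + ζ - 1 + θ)^2) := by
        field_simp
      rw [hrat, div_le_iff₀ hQ]
      have hA : 0 < s - ζ - 1 + 2*θ := by linarith
      have hB : 0 < 1 - s - ζ := by linarith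
      have hC : 0 < 2*θ*(1-s) - 2*ζ - 2*θ*ζ := by
        nlinarith [mul_pos (show (0:ℝ) < 1/2 - θ by linarith) hζ0]
      nlinarith [mul_pos hA hC,
        mul_pos (mul_pos hB hζ0) (show (0:ℝ) < 1 + 2*θ by linarith)]
  · -- lower bound
    by_cases hm : s - ζ ≤ 1 - θ
    · have hw0 : wProfile θ (s - ζ) = 0 := by simp [wProfile, hm]
      rw [hw0, Real.exp_zero, mul_one]
      nlinarith
    · rw [expW_gt θ _ hm hθne hP, mul_div_assoc', le_div_iff₀ hP]
      have h9 : θ^2 - (s - ζ - 1 + θ)^2 ≤ 9*ζ := by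
        nlinarith [sq_nonneg (s - ζ - 1), mul_pos (show (0:ℝ) < 1/2 - θ by linarith) hζ0]
      nlinarith [mul_le_mul_of_nonneg_left h9 (sq_nonneg θ), mul_pos hζ0 (mul_pos hθ0 hθ0)]
  · -- upper bound
    by_cases hm : s - ζ ≤ 1 - θ
    · have hw0 : wProfile θ (s - ζ) = 0 := by simp [wProfile, hm]
      rw [hw0, Real.exp_zero, mul_one]
      nlinarith
    · have hm' : 1 - θ < s - ζ := not_le.mp hm
      rw [expW_gt θ _ hm hθne hP, mul_div_assoc', div_le_one hP]
      have h1 : 0 < θ - (1 - s) - ζ := by linarith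
      have h2 : 0 < 1 - s + ζ := by linarith
      have h3 : ζ*θ^2 ≤ ζ := by
        nlinarith [mul_pos hζ0 (mul_pos (show (0:ℝ) < 1 - θ by linarith)
          (show (0:ℝ) < 1 + θ by linarith))]
      nlinarith [mul_pos h1 h2, h3, mul_pos hθ0 hζ0]
end

section
/- Let k ≥ 1, r > 0, and let B(y₀, 4r) ⊆ ℝ^k be a Euclidean ball. For u ∈ L¹(B(y₀,4r)) with u ≥ 0, and for x, y ∈ ℝ^k, define F_u(x,y) := ∫₀^{|x-y|} u(x + s·(y-x)/|x-y|) ds (the integral of u along the segment from x to y). Then for any x₀, y₀ with |x₀ − y₀| = r: ∫_{B(x₀,r)} ∫_{B(y₀,r)} F_u(x,y) dy dx ≤ 2^{k+3}·r·|B(y₀,4r)|·∫_{B(y₀,4r)} u(z) dz. -/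
/-!
Substituting `s = τ |x - y|` gives `F_u(x, y) = |x - y| ∫₀¹ u(x + τ (y - x)) dτ`, and `|x - y| < 3r`.
Split `τ` at `1/2`. For `τ ≥ 1/2` and fixed `x`, the map `y ↦ x + τ (y - x)` is a homothety of
ratio `τ`, so its Jacobian is at least `2⁻ᵏ`, and by convexity it sends `B(y₀, r)` into
`B(y₀, 4r)`; hence `∫_{B(y₀,r)} u(x + τ (y - x)) dy ≤ 2ᵏ ∫_{B(y₀,4r)} u`. For `τ ≤ 1/2` the same
holds with the roles of `x` and `y` exchanged, the homothety being centred at `y` with ratio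
`1 - τ`. Tonelli then bounds the double integral by `3r · 2ᵏ (|B(x₀,r)| + |B(y₀,r)|) ∫_{B(y₀,4r)} u`.
-/

open MeasureTheory Metric Set Module
open scoped ENNReal

theorem AEMeasurable.exists_measurable_ge_lintegral_eq {α : Type*} [MeasurableSpace α]
    {μ : Measure α} {f : α → ℝ≥0∞} (hf : AEMeasurable f μ) :
    ∃ g : α → ℝ≥0∞, Measurable g ∧ f ≤ g ∧ ∫⁻ a, g a ∂μ = ∫⁻ a, f a ∂μ := by
  classical
  set N := toMeasurable μ {a | f a ≠ hf.mk f a}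
  have hN : ∀ᵐ a ∂μ, a ∉ N := by
    rw [← measure_eq_zero_iff_ae_notMem, measure_toMeasurable]
    exact hf.ae_eq_mk
  refine ⟨N.piecewise (fun _ => ∞) (hf.mk f),
    Measurable.piecewise (measurableSet_toMeasurable _ _) measurable_const hf.measurable_mk,
    fun a => ?_, lintegral_congr_ae ?_⟩
  · by_cases ha : a ∈ N
    · simp [ha]
    · rw [piecewise_eq_of_notMem _ _ _ ha]
      exact (not_not.1 fun h => ha (subset_toMeasurable _ _ h)).le
  · filter_upwards [hf.ae_eq_mk, hN] with a hfa ha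
    rw [piecewise_eq_of_notMem _ _ _ ha, hfa]

theorem setLIntegral_le_of_le_of_measure_le_one {α : Type*} [MeasurableSpace α] {ν : Measure α}
    {s : Set α} (hs : MeasurableSet s) (hνs : ν s ≤ 1) {f : α → ℝ≥0∞} {K : ℝ≥0∞}
    (hf : ∀ a ∈ s, f a ≤ K) : ∫⁻ a in s, f a ∂ν ≤ K :=
  calc ∫⁻ a in s, f a ∂ν ≤ ∫⁻ _ in s, K ∂ν := setLIntegral_mono' hs hf
    _ = K * ν s := setLIntegral_const s K
    _ ≤ K := mul_le_of_le_one_right' hνs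

section HaarScaling

variable {E : Type*} [NormedAddCommGroup E] [NormedSpace ℝ E] [FiniteDimensional ℝ E]
  [MeasurableSpace E] [BorelSpace E] (μ : Measure E) [μ.IsAddHaarMeasure]

theorem lintegral_comp_smul (F : E → ℝ≥0∞) {σ : ℝ} (hσ : σ ≠ 0) :
    ∫⁻ w, F (σ • w) ∂μ = ENNReal.ofReal |(σ ^ finrank ℝ E)⁻¹| * ∫⁻ z, F z ∂μ := by
  calc ∫⁻ w, F (σ • w) ∂μ = ∫⁻ z, F z ∂(μ.map (σ • ·)) :=
        (lintegral_map_equiv F (MeasurableEquiv.smul₀ σ hσ)).symm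
    _ = _ := by rw [Measure.map_addHaar_smul μ hσ, lintegral_smul_measure, smul_eq_mul]

theorem lintegral_comp_homothety (F : E → ℝ≥0∞) (p : E) {σ : ℝ} (hσ : σ ≠ 0) :
    ∫⁻ w, F (p + σ • (w - p)) ∂μ = ENNReal.ofReal |(σ ^ finrank ℝ E)⁻¹| * ∫⁻ z, F z ∂μ := by
  rw [lintegral_sub_right_eq_self (fun w => F (p + σ • w)) p,
    lintegral_comp_smul μ (fun w => F (p + w)) hσ, lintegral_add_left_eq_self]

theorem setLIntegral_comp_homothety_le {A C : Set E} (hA : MeasurableSet A)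
    (hC : MeasurableSet C) (hCconv : Convex ℝ C) (hAC : A ⊆ C) {p : E} (hp : p ∈ C) {σ : ℝ}
    (hσ : σ ∈ Icc (1 / 2 : ℝ) 1) (G : E → ℝ≥0∞) :
    ∫⁻ w in A, G (p + σ • (w - p)) ∂μ ≤ 2 ^ finrank ℝ E * ∫⁻ z in C, G z ∂μ := by
  have hσ0 : 0 < σ := by linarith [hσ.1]
  have hmaps : ∀ w ∈ A, p + σ • (w - p) ∈ C := fun w hw =>
    hCconv.add_smul_sub_mem hp (hAC hw) ⟨hσ0.le, hσ.2⟩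
  have hjac : ENNReal.ofReal |(σ ^ finrank ℝ E)⁻¹| ≤ 2 ^ finrank ℝ E := by
    rw [abs_of_pos (by positivity), ← inv_pow, ENNReal.ofReal_pow (by positivity),
      ← ENNReal.ofReal_ofNat 2]
    gcongr
    exact inv_le_of_inv_le₀ (by norm_num) (by linarith [hσ.1])
  calc ∫⁻ w in A, G (p + σ • (w - p)) ∂μ = ∫⁻ w in A, C.indicator G (p + σ • (w - p)) ∂μ :=
        setLIntegral_congr_fun hA fun w hw => (indicator_of_mem (hmaps w hw) G).symm
    _ ≤ ∫⁻ w, C.indicator G (p + σ • (w - p)) ∂μ := setLIntegral_le_lintegral _ _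
    _ = ENNReal.ofReal |(σ ^ finrank ℝ E)⁻¹| * ∫⁻ z in C, G z ∂μ := by
        rw [lintegral_comp_homothety μ _ p hσ0.ne', lintegral_indicator hC]
    _ ≤ 2 ^ finrank ℝ E * ∫⁻ z in C, G z ∂μ := by gcongr

end HaarScaling

theorem setLIntegral_Ioc_zero_eq {d : ℝ} (hd : 0 < d) (f : ℝ → ℝ≥0∞) :
    ∫⁻ s in Ioc 0 d, f s = ENNReal.ofReal d * ∫⁻ τ in Ioc 0 1, f (d * τ) := by
  have hpre : (d * ·) ⁻¹' Ioc 0 d = Ioc 0 1 := by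
    rw [preimage_const_mul_Ioc₀ _ _ hd, zero_div, div_self hd.ne']
  have hscale := lintegral_comp_smul volume ((Ioc 0 d).indicator f) hd.ne'
  simp only [smul_eq_mul, finrank_self, pow_one, lintegral_indicator measurableSet_Ioc] at hscale
  have hind : ∀ τ, ((d * ·) ⁻¹' Ioc 0 d).indicator (fun τ => f (d * τ)) τ
      = (Ioc 0 d).indicator f (d * τ) := fun τ => indicator_comp_right (d * ·)
  rw [← hpre, ← lintegral_indicator (measurableSet_Ioc.preimage (measurable_const_mul d)),
    lintegral_congr hind, hscale, ← mul_assoc, ← ENNReal.ofReal_mul hd.le,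
    abs_of_pos (inv_pos.2 hd), mul_inv_cancel₀ hd.ne', ENNReal.ofReal_one, one_mul]

theorem setLIntegral_segment_eq {E : Type*} [NormedAddCommGroup E] [NormedSpace ℝ E]
    (G : E → ℝ≥0∞) (x y : E) :
    ∫⁻ s in Ioc 0 (dist x y), G (x + (s / ‖y - x‖) • (y - x))
      = ENNReal.ofReal (dist x y) * ∫⁻ τ in Ioc (0 : ℝ) 1, G (x + τ • (y - x)) := by
  rcases eq_or_ne x y with rfl | hxy
  · simp
  have hd : 0 < dist x y := dist_pos.2 hxy
  rw [setLIntegral_Ioc_zero_eq hd, ← dist_eq_norm']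
  simp_rw [mul_div_cancel_left₀ _ hd.ne']

theorem enorm_integral_integral_segment_le {E F : Type*} [NormedAddCommGroup E]
    [NormedSpace ℝ E] [MeasurableSpace E] [NormedAddCommGroup F] [NormedSpace ℝ F]
    (μ : Measure E) (A B : Set E) (f : E → F) :
    ‖∫ x in A, ∫ y in B, (∫ s in (0 : ℝ)..dist x y, f (x + (s / ‖y - x‖) • (y - x))) ∂μ ∂μ‖ₑ
      ≤ ∫⁻ x in A, ∫⁻ y in B,
          (∫⁻ s in Ioc 0 (dist x y), ‖f (x + (s / ‖y - x‖) • (y - x))‖ₑ) ∂μ ∂μ := by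
  refine (enorm_integral_le_lintegral_enorm _).trans (lintegral_mono fun x => ?_)
  refine (enorm_integral_le_lintegral_enorm _).trans (lintegral_mono fun y => ?_)
  rw [intervalIntegral.integral_of_le dist_nonneg]
  exact enorm_integral_le_lintegral_enorm _

section Segment

variable {E : Type*} [NormedAddCommGroup E] [NormedSpace ℝ E] [FiniteDimensional ℝ E]
  [MeasurableSpace E] [BorelSpace E] (μ : Measure E) [μ.IsAddHaarMeasure]

theorem lintegral_lintegral_segment_le {A B C : Set E} (hA : MeasurableSet A)
    (hB : MeasurableSet B) (hC : MeasurableSet C) (hCconv : Convex ℝ C) (hAC : A ⊆ C)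
    (hBC : B ⊆ C) {G : E → ℝ≥0∞} (hG : Measurable G) :
    ∫⁻ x in A, ∫⁻ y in B, (∫⁻ τ in Ioc (0 : ℝ) 1, G (x + τ • (y - x))) ∂μ ∂μ
      ≤ 2 ^ finrank ℝ E * (μ A + μ B) * ∫⁻ z in C, G z ∂μ := by
  set K := 2 ^ finrank ℝ E * ∫⁻ z in C, G z ∂μ
  have hmeas : ∀ I : Set ℝ, Measurable fun q : E × E => ∫⁻ τ in I, G (q.1 + τ • (q.2 - q.1)) :=
    fun I => (hG.comp (by fun_prop : Measurable fun q : (E × E) × ℝ =>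
      q.1.1 + q.2 • (q.1.2 - q.1.1))).lintegral_prod_right'
  have hfar : ∀ x ∈ C, ∫⁻ y in B, (∫⁻ τ in Ioc (1 / 2 : ℝ) 1, G (x + τ • (y - x))) ∂μ ≤ K := by
    intro x hx
    rw [lintegral_lintegral_swap (by fun_prop)]
    refine setLIntegral_le_of_le_of_measure_le_one measurableSet_Ioc
      (by simp) fun τ hτ => ?_
    exact setLIntegral_comp_homothety_le μ hB hC hCconv hBC hx ⟨hτ.1.le, hτ.2⟩ G
  have hnear : ∀ y ∈ C, ∫⁻ x in A, (∫⁻ τ in Ioc (0 : ℝ) (1 / 2), G (x + τ • (y - x))) ∂μ ≤ K := by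
    intro y hy
    rw [lintegral_lintegral_swap (by fun_prop)]
    refine setLIntegral_le_of_le_of_measure_le_one measurableSet_Ioc
      (by simp) fun τ hτ => ?_
    have hflip : ∀ x : E, x + τ • (y - x) = y + (1 - τ) • (x - y) := fun x => by module
    simp_rw [hflip]
    exact setLIntegral_comp_homothety_le μ hA hC hCconv hAC hy
      ⟨by linarith [hτ.2], by linarith [hτ.1]⟩ G
  calc ∫⁻ x in A, ∫⁻ y in B, (∫⁻ τ in Ioc (0 : ℝ) 1, G (x + τ • (y - x))) ∂μ ∂μ
      ≤ ∫⁻ x in A, ∫⁻ y in B, ((∫⁻ τ in Ioc (0 : ℝ) (1 / 2), G (x + τ • (y - x)))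
          + ∫⁻ τ in Ioc (1 / 2 : ℝ) 1, G (x + τ • (y - x))) ∂μ ∂μ := by
        gcongr with x y
        rw [← Ioc_union_Ioc_eq_Ioc (by norm_num : (0 : ℝ) ≤ 1 / 2) (by norm_num)]
        exact lintegral_union_le _ _ _
    _ = ∫⁻ x in A, ((∫⁻ y in B, (∫⁻ τ in Ioc (0 : ℝ) (1 / 2), G (x + τ • (y - x))) ∂μ)
          + ∫⁻ y in B, (∫⁻ τ in Ioc (1 / 2 : ℝ) 1, G (x + τ • (y - x))) ∂μ) ∂μ :=
        lintegral_congr fun x => lintegral_add_left ((hmeas _).comp measurable_prodMk_left) _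
    _ = (∫⁻ y in B, ∫⁻ x in A, (∫⁻ τ in Ioc (0 : ℝ) (1 / 2), G (x + τ • (y - x))) ∂μ ∂μ)
          + ∫⁻ x in A, ∫⁻ y in B, (∫⁻ τ in Ioc (1 / 2 : ℝ) 1, G (x + τ • (y - x))) ∂μ ∂μ := by
        rw [lintegral_add_left ((hmeas _).lintegral_prod_right'),
          lintegral_lintegral_swap (hmeas _).aemeasurable]
    _ ≤ (∫⁻ _ in B, K ∂μ) + ∫⁻ _ in A, K ∂μ :=
        add_le_add (setLIntegral_mono' hB fun y hy => hnear y (hBC hy))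
          (setLIntegral_mono' hA fun x hx => hfar x (hAC hx))
    _ = 2 ^ finrank ℝ E * (μ A + μ B) * ∫⁻ z in C, G z ∂μ := by
        simp only [setLIntegral_const, K]
        ring

theorem lintegral_lintegral_segment_length_le {A B C : Set E} (hA : MeasurableSet A)
    (hB : MeasurableSet B) (hC : MeasurableSet C) (hCconv : Convex ℝ C) (hAC : A ⊆ C)
    (hBC : B ⊆ C) {D : ℝ} (hD : ∀ x ∈ A, ∀ y ∈ B, dist x y ≤ D) {G : E → ℝ≥0∞}
    (hG : Measurable G) :
    ∫⁻ x in A, ∫⁻ y in B, (∫⁻ s in Ioc 0 (dist x y), G (x + (s / ‖y - x‖) • (y - x))) ∂μ ∂μ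
      ≤ ENNReal.ofReal D * (2 ^ finrank ℝ E * (μ A + μ B) * ∫⁻ z in C, G z ∂μ) :=
  calc ∫⁻ x in A, ∫⁻ y in B, (∫⁻ s in Ioc 0 (dist x y), G (x + (s / ‖y - x‖) • (y - x))) ∂μ ∂μ
      = ∫⁻ x in A, ∫⁻ y in B, ENNReal.ofReal (dist x y)
          * (∫⁻ τ in Ioc (0 : ℝ) 1, G (x + τ • (y - x))) ∂μ ∂μ := by
        simp_rw [setLIntegral_segment_eq]
    _ ≤ ∫⁻ x in A, ∫⁻ y in B, ENNReal.ofReal D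
          * (∫⁻ τ in Ioc (0 : ℝ) 1, G (x + τ • (y - x))) ∂μ ∂μ :=
        setLIntegral_mono' hA fun x hx => setLIntegral_mono' hB fun y hy => by
          gcongr
          exact hD x hx y hy
    _ = ENNReal.ofReal D
          * ∫⁻ x in A, ∫⁻ y in B, (∫⁻ τ in Ioc (0 : ℝ) 1, G (x + τ • (y - x))) ∂μ ∂μ := by
        simp_rw [lintegral_const_mul' _ _ ENNReal.ofReal_ne_top]
    _ ≤ _ := by
        gcongr
        exact lintegral_lintegral_segment_le μ hA hB hC hCconv hAC hBC hG

theorem lintegral_lintegral_segment_ball_le {x₀ y₀ : E} {r : ℝ} (hxy : dist x₀ y₀ = r)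
    {G : E → ℝ≥0∞} (hG : Measurable G) :
    ∫⁻ x in ball x₀ r, ∫⁻ y in ball y₀ r,
        (∫⁻ s in Ioc 0 (dist x y), G (x + (s / ‖y - x‖) • (y - x))) ∂μ ∂μ
      ≤ ENNReal.ofReal (2 ^ (finrank ℝ E + 3) * r) * μ (ball y₀ (4 * r))
          * ∫⁻ z in ball y₀ (4 * r), G z ∂μ := by
  have hr : 0 ≤ r := hxy ▸ dist_nonneg
  have hAC : ball x₀ r ⊆ ball y₀ (4 * r) := ball_subset_ball' (by linarith)
  have hBC : ball y₀ r ⊆ ball y₀ (4 * r) := ball_subset_ball (by linarith)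
  have hD : ∀ x ∈ ball x₀ r, ∀ y ∈ ball y₀ r, dist x y ≤ 3 * r := fun x hx y hy => by
    have := dist_triangle4 x x₀ y₀ y
    rw [mem_ball] at hx hy
    rw [dist_comm y₀ y] at this
    linarith
  set J := ∫⁻ z in ball y₀ (4 * r), G z ∂μ
  calc _ ≤ ENNReal.ofReal (3 * r)
          * (2 ^ finrank ℝ E * (μ (ball x₀ r) + μ (ball y₀ r)) * J) :=
        lintegral_lintegral_segment_length_le μ measurableSet_ball measurableSet_ball
          measurableSet_ball (convex_ball _ _) hAC hBC hD hG
    _ ≤ ENNReal.ofReal (3 * r) * (2 ^ finrank ℝ E * (2 * μ (ball y₀ (4 * r))) * J) := by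
        gcongr
        rw [two_mul]
        exact add_le_add (measure_mono hAC) (measure_mono hBC)
    _ = 6 * 2 ^ finrank ℝ E * ENNReal.ofReal r * μ (ball y₀ (4 * r)) * J := by
        rw [ENNReal.ofReal_mul (by norm_num), ENNReal.ofReal_ofNat]
        ring
    _ ≤ 8 * 2 ^ finrank ℝ E * ENNReal.ofReal r * μ (ball y₀ (4 * r)) * J := by
        gcongr
        norm_num
    _ = ENNReal.ofReal (2 ^ (finrank ℝ E + 3) * r) * μ (ball y₀ (4 * r)) * J := by
        rw [ENNReal.ofReal_mul (by positivity), ENNReal.ofReal_pow zero_le_two,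
          ENNReal.ofReal_ofNat]
        ring

end Segment

theorem stmt_18_general (k : ℕ) (r : ℝ)
    (x₀ y₀ : EuclideanSpace ℝ (Fin k)) (hxy : dist x₀ y₀ = r)
    (u : EuclideanSpace ℝ (Fin k) → ℝ) (hu0 : ∀ z, 0 ≤ u z)
    (hu : IntegrableOn u (ball y₀ (4*r))) :
    (∫ x in ball x₀ r, ∫ y in ball y₀ r,
        (∫ s in (0:ℝ)..(dist x y), u (x + (s / ‖y - x‖) • (y - x))))
      ≤ 2 ^ (k+3) * r * (volume (ball y₀ (4*r))).toReal *
        ∫ z in ball y₀ (4*r), u z := by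
  have hr : 0 ≤ r := hxy ▸ dist_nonneg
  -- `F_u` evaluates `u` along segments, which can lie in null sets, so `u` is dominated everywhere
  -- by a measurable function rather than replaced by an a.e.-equal one.
  obtain ⟨g, hg, hug, hgu⟩ := hu.aemeasurable.enorm.exists_measurable_ge_lintegral_eq
  have hJ : ∫⁻ z in ball y₀ (4*r), g z = ENNReal.ofReal (∫ z in ball y₀ (4*r), u z) := by
    rw [hgu, ← ofReal_integral_norm_eq_lintegral_enorm hu]
    simp_rw [Real.norm_of_nonneg (hu0 _)]
  refine (Real.le_norm_self _).trans ?_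
  rw [← toReal_enorm]
  refine ENNReal.toReal_le_of_le_ofReal (mul_nonneg (by positivity) (integral_nonneg hu0)) ?_
  calc _ ≤ ∫⁻ x in ball x₀ r, ∫⁻ y in ball y₀ r, ∫⁻ s in Ioc 0 (dist x y),
          ‖u (x + (s / ‖y - x‖) • (y - x))‖ₑ := enorm_integral_integral_segment_le _ _ _ u
    _ ≤ ∫⁻ x in ball x₀ r, ∫⁻ y in ball y₀ r, ∫⁻ s in Ioc 0 (dist x y),
          g (x + (s / ‖y - x‖) • (y - x)) := by
        gcongr with x y s
        exact hug _
    _ ≤ ENNReal.ofReal (2 ^ (k + 3) * r) * volume (ball y₀ (4 * r))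
          * ∫⁻ z in ball y₀ (4 * r), g z := by
        simpa only [finrank_euclideanSpace_fin] using
          lintegral_lintegral_segment_ball_le volume hxy hg
    _ = ENNReal.ofReal (2 ^ (k + 3) * r) * ENNReal.ofReal (volume (ball y₀ (4 * r))).toReal
          * ENNReal.ofReal (∫ z in ball y₀ (4 * r), u z) := by
        rw [hJ, ENNReal.ofReal_toReal measure_ball_lt_top.ne]
    _ = _ := by
        rw [← ENNReal.ofReal_mul (by positivity), ← ENNReal.ofReal_mul (by positivity)]

/-- Euclidean model case of the Cheeger–Colding segment
inequality. -/
theorem stmt_18 (k : ℕ) (hk : 1 ≤ k) (r : ℝ) (hr : 0 < r)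
    (x₀ y₀ : EuclideanSpace ℝ (Fin k)) (hxy : dist x₀ y₀ = r)
    (u : EuclideanSpace ℝ (Fin k) → ℝ) (hu0 : ∀ z, 0 ≤ u z)
    (hu : IntegrableOn u (ball y₀ (4*r))) :
    (∫ x in ball x₀ r, ∫ y in ball y₀ r,
        (∫ s in (0:ℝ)..(dist x y), u (x + (s / ‖y - x‖) • (y - x))))
      ≤ 2 ^ (k+3) * r * (volume (ball y₀ (4*r))).toReal *
        ∫ z in ball y₀ (4*r), u z :=
  stmt_18_general k r x₀ y₀ hxy u hu0 hu
end
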